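/- arXiv:2602.12680 — 4 statements merged into one kernel-verified Lean document; each statement's English description precedes it below -/
import Mathlib

section
/- Let $d \ge 1$, let $x \in \mathbb{R}^d$ have pairwise distinct squared entries ($x_j^2 \neq x_k^2$ for $j \neq k$) with all $x_j \neq 0$, let $Y \in \mathbb{R}$ with $Y \neq 0$, and let $I = \arg\max_j |x_j|$, so $\|x\|_\infty = |x_I|$. Define $\bar{\mathcal{F}}(\tau) = \log(2\tau) + \log\|x\|_\infty + \frac{|Y|}{\|x\|_\infty \tau} - \log\prod_{j=1, j\neq I}^d \frac{x_I^2}{x_I^2 - x_j^2}$ for $\tau > 0$. Then $\bar{\mathcal{F}}$ attains its infimum over $\tau > 0$ uniquely at $\tau^* = \frac{|Y|}{\|x\|_\infty}$, and $2\bar{\mathcal{F}}(\tau^*) = 2\log\frac{|Y|}{\|x\|_\infty} - 2\log\Big(\frac{1}{2\|x\|_\infty}\prod_{j=1, j\neq I}^d \frac{x_I^2}{x_I^2 - x_j^2}\Big) + 2$; moreover $\frac{|Y|}{\|x\|_\infty} = \|\theta^*\|_1$ where $\theta^*$ is the minimum $\ell^1$-norm solution of $x\cdot\theta = Y$. -/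
open Real

/-!
Writing `τ* = |Y| / ‖x‖_∞`, the free energy is `log τ + τ* / τ` plus a constant, and
`log τ + τ* / τ - (log τ* + 1) = (u - 1) - log u` with `u = τ* / τ`, which is nonnegative
and vanishes only at `u = 1` since `log u ≤ u - 1` with equality only at `u = 1`.
For the interpolation problem, Hölder's inequality gives `|Y| ≤ ‖x‖_∞ ‖θ‖₁`, and the
`1`-sparse vector `(Y / x_I) e_I` attains the bound.
-/

lemma log_add_one_le_log_add_div {a τ : ℝ} (ha : 0 < a) (hτ : 0 < τ) :
    log a + 1 ≤ log τ + a / τ := by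
  have hlog := log_le_sub_one_of_pos (div_pos ha hτ)
  rw [log_div ha.ne' hτ.ne'] at hlog
  linarith

lemma eq_of_log_add_div_eq {a τ : ℝ} (ha : 0 < a) (hτ : 0 < τ)
    (h : log τ + a / τ = log a + 1) : τ = a := by
  by_contra hne
  have hu : a / τ ≠ 1 := fun hu => hne ((div_eq_one_iff_eq hτ.ne').mp hu).symm
  have hlog := log_lt_sub_one_of_pos (div_pos ha hτ) hu
  rw [log_div ha.ne' hτ.ne'] at hlog
  linarith

lemma abs_sum_mul_le_mul_sum_abs {ι : Type*} [Fintype ι] (x θ : ι → ℝ) {M : ℝ}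
    (hM : ∀ j, |x j| ≤ M) : |∑ j, x j * θ j| ≤ M * ∑ j, |θ j| :=
  calc |∑ j, x j * θ j| ≤ ∑ j, |x j| * |θ j| := by
        simpa only [abs_mul] using Finset.abs_sum_le_sum_abs (fun j => x j * θ j) Finset.univ
    _ ≤ ∑ j, M * |θ j| := by
        gcongr with j
        exact hM j
    _ = M * ∑ j, |θ j| := (Finset.mul_sum _ _ _).symm

lemma isLeast_sum_abs_of_sum_mul_eq {ι : Type*} [Fintype ι] [DecidableEq ι]
    (x : ι → ℝ) (Y : ℝ) {I : ι} (hxI : x I ≠ 0) (hI : ∀ j, |x j| ≤ |x I|) :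
    IsLeast ((fun θ : ι → ℝ => ∑ j, |θ j|) '' {θ | ∑ j, x j * θ j = Y}) (|Y| / |x I|) := by
  refine ⟨⟨Pi.single I (Y / x I), ?_, ?_⟩, ?_⟩
  · simp [Pi.single_apply, mul_div_cancel₀ _ hxI]
  · simp [Pi.single_apply, apply_ite (|·|), abs_div]
  · rintro _ ⟨θ, hθ, rfl⟩
    rw [div_le_iff₀' (abs_pos.mpr hxI), ← hθ]
    exact abs_sum_mul_le_mul_sum_abs x θ hI

theorem iic_ell1_single_obs_general (d : ℕ) (x : Fin d → ℝ)
    (hxnz : ∀ j, x j ≠ 0)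
    (hdist : ∀ j k, j ≠ k → (x j) ^ 2 ≠ (x k) ^ 2)
    (Y : ℝ) (hY : Y ≠ 0)
    (I : Fin d) (hI : ∀ j, |x j| ≤ |x I|)
    (F : ℝ → ℝ)
    (hF : ∀ τ : ℝ, F τ = Real.log (2 * τ) + Real.log |x I|
        + |Y| / (|x I| * τ)
        - Real.log (∏ j ∈ Finset.univ.erase I, (x I) ^ 2 / ((x I) ^ 2 - (x j) ^ 2))) :
    (∀ τ : ℝ, 0 < τ → F (|Y| / |x I|) ≤ F τ) ∧
    (∀ τ : ℝ, 0 < τ → F τ = F (|Y| / |x I|) → τ = |Y| / |x I|) ∧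
    2 * F (|Y| / |x I|)
      = 2 * Real.log (|Y| / |x I|)
        - 2 * Real.log ((1 / (2 * |x I|))
            * ∏ j ∈ Finset.univ.erase I, (x I) ^ 2 / ((x I) ^ 2 - (x j) ^ 2))
        + 2 ∧
    IsLeast ((fun θ : Fin d → ℝ => ∑ j, |θ j|) '' {θ | ∑ j, x j * θ j = Y})
      (|Y| / |x I|) := by
  have hxI : 0 < |x I| := abs_pos.mpr (hxnz I)
  set τ₀ := |Y| / |x I|
  have hτ₀ : 0 < τ₀ := div_pos (abs_pos.mpr hY) hxI
  set P := ∏ j ∈ Finset.univ.erase I, (x I) ^ 2 / ((x I) ^ 2 - (x j) ^ 2)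
  have hP : P ≠ 0 := Finset.prod_ne_zero_iff.mpr fun j hj =>
    div_ne_zero (pow_ne_zero 2 (hxnz I))
      (sub_ne_zero.mpr (hdist I j (Finset.ne_of_mem_erase hj).symm))
  have hF' : ∀ τ, 0 < τ → F τ = log 2 + log |x I| - log P + (log τ + τ₀ / τ) := by
    intro τ hτ
    rw [hF, log_mul two_ne_zero hτ.ne', div_div]
    ring
  have hFτ₀ : F τ₀ = log 2 + log |x I| - log P + (log τ₀ + 1) := by
    rw [hF' τ₀ hτ₀, div_self hτ₀.ne']
  refine ⟨fun τ hτ => ?_, fun τ hτ h => ?_, ?_, isLeast_sum_abs_of_sum_mul_eq x Y (hxnz I) hI⟩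
  · rw [hFτ₀, hF' τ hτ]
    linarith [log_add_one_le_log_add_div hτ₀ hτ]
  · rw [hFτ₀, hF' τ hτ] at h
    exact eq_of_log_add_div_eq hτ₀ hτ (by linarith)
  · rw [hFτ₀, log_mul (by positivity) hP, one_div, log_inv, log_mul two_ne_zero hxI.ne']
    ring

/-- IIC for the minimum `ℓ¹`-norm interpolator with a single
observation (`n = 1`).  Here `x ∈ ℝᵈ` has nonzero entries with pairwise distinct
squares, `Y ≠ 0`, and `I = argmax_j |x_j|` so `‖x‖_∞ = |x_I|`.  The free energy
`F(τ) = log(2τ) + log‖x‖_∞ + |Y|/(‖x‖_∞ τ) - log ∏_{j ≠ I} x_I²/(x_I² - x_j²)`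
attains its infimum over `τ > 0` uniquely at `τ* = |Y|/‖x‖_∞`, with
`2F(τ*) = 2 log(|Y|/‖x‖_∞) - 2 log((1/(2‖x‖_∞)) ∏_{j≠I} x_I²/(x_I²-x_j²)) + 2`;
moreover `|Y|/‖x‖_∞` is the minimum of `‖θ‖₁` over `{θ : x·θ = Y}`. -/
theorem iic_ell1_single_obs (d : ℕ) (hd : 1 ≤ d) (x : Fin d → ℝ)
    (hxnz : ∀ j, x j ≠ 0)
    (hdist : ∀ j k, j ≠ k → (x j) ^ 2 ≠ (x k) ^ 2)
    (Y : ℝ) (hY : Y ≠ 0)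
    (I : Fin d) (hI : ∀ j, |x j| ≤ |x I|)
    (F : ℝ → ℝ)
    (hF : ∀ τ : ℝ, F τ = Real.log (2 * τ) + Real.log |x I|
        + |Y| / (|x I| * τ)
        - Real.log (∏ j ∈ Finset.univ.erase I, (x I) ^ 2 / ((x I) ^ 2 - (x j) ^ 2))) :
    (∀ τ : ℝ, 0 < τ → F (|Y| / |x I|) ≤ F τ) ∧
    (∀ τ : ℝ, 0 < τ → F τ = F (|Y| / |x I|) → τ = |Y| / |x I|) ∧
    2 * F (|Y| / |x I|)
      = 2 * Real.log (|Y| / |x I|)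
        - 2 * Real.log ((1 / (2 * |x I|))
            * ∏ j ∈ Finset.univ.erase I, (x I) ^ 2 / ((x I) ^ 2 - (x j) ^ 2))
        + 2 ∧
    IsLeast ((fun θ : Fin d → ℝ => ∑ j, |θ j|) '' {θ | ∑ j, x j * θ j = Y})
      (|Y| / |x I|) :=
  iic_ell1_single_obs_general d x hxnz hdist Y hY I hI F hF
end

section
/- Let $X \in \mathbb{R}^{n \times d}$ with $d \ge n$ have full row rank, let $Y \in \mathbb{R}^n$, and let $R : \mathbb{R}^d \to \mathbb{R}$ be convex with a unique global minimizer $\theta^*$ over the affine set $\{\theta : X\theta = Y\}$. For $z \in \ker X$, let $\nabla_z R(\theta^*) = \lim_{t \to 0^+} \frac{R(\theta^* + tz) - R(\theta^*)}{t}$ denote the one-sided directional derivative. Suppose $V = \int_{\ker X} \exp\{-\nabla_z R(\theta^*)\}\,\mathrm{d}\mathcal{H}^{d-n}(z)$ is finite. Then $\lim_{\tau \to 0^+}\, \tau^{-(d-n)}\, e^{R(\theta^*)/\tau} \int_{\ker X} e^{-R(\theta^* + v)/\tau}\,\mathrm{d}\mathcal{H}^{d-n}(v) = V$; equivalently, $\int_{X\theta=Y}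 e^{-R(\theta)/\tau}\,\mathrm{d}\mathcal{H}^{d-n}(\theta) \sim \tau^{d-n}\, V\, e^{-R(\theta^*)/\tau}$ as $\tau \to 0^+$. -/
open Real MeasureTheory Filter
open scoped Topology

/-!
Substituting `v = τ • z` on the kernel of `X` costs the factor `τ ^ (d - n)` by the scaling of
Hausdorff measure, and turns the normalized integral into
`∫ z in ker X, exp (-(R (θs + τ • z) - R θs) / τ)`. By convexity the difference quotient
decreases to `D z` as `τ ↓ 0`, so the integrands increase to `exp (-D z)` and are dominated by
it; dominated convergence concludes.
-/

theorem ConvexOn.comp_add_smul {E : Type*} [AddCommGroup E] [Module ℝ E] {R : E → ℝ}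
    (hR : ConvexOn ℝ Set.univ R) (x z : E) : ConvexOn ℝ Set.univ fun t : ℝ => R (x + t • z) := by
  simpa [Function.comp_def, AffineMap.lineMap_apply, add_comm]
    using hR.comp_affineMap (AffineMap.lineMap x (x + z))

theorem ConvexOn.le_slope_of_tendsto {E : Type*} [AddCommGroup E] [Module ℝ E] {R : E → ℝ}
    (hR : ConvexOn ℝ Set.univ R) {x z : E} {L : ℝ}
    (hL : Tendsto (fun t : ℝ => (R (x + t • z) - R x) / t) (𝓝[>] 0) (𝓝 L))
    {τ : ℝ} (hτ : 0 < τ) : L ≤ (R (x + τ • z) - R x) / τ := by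
  refine le_of_tendsto hL ?_
  filter_upwards [Ioc_mem_nhdsGT hτ] with t ht
  simpa using (hR.comp_add_smul x z).secant_mono (Set.mem_univ 0) (Set.mem_univ t)
    (Set.mem_univ τ) ht.1.ne' hτ.ne' ht.2

theorem setIntegral_comp_smul_hausdorffMeasure {𝕜 E F : Type*} [NormedField 𝕜]
    [NormedAddCommGroup E] [NormedSpace 𝕜 E] [MeasurableSpace E] [BorelSpace E]
    [NormedAddCommGroup F] [NormedSpace ℝ F] {s : ℝ} (hs : 0 ≤ s) (K : Submodule 𝕜 E)
    (g : E → F) {c : 𝕜} (hc : c ≠ 0) :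
    ∫ z in K, g (c • z) ∂μH[s] = ‖c‖ ^ (-s) • ∫ v in K, g v ∂μH[s] := by
  have hmap : Measure.map (MeasurableEquiv.smul₀ c hc) (μH[s] : Measure E) =
      ‖c‖₊⁻¹ ^ s • μH[s] := by
    convert map_homothety_hausdorffMeasure hs (0 : E) hc using 3
    ext z
    simp [AffineMap.homothety_apply]
  have hpre : MeasurableEquiv.smul₀ c hc ⁻¹' (K : Set E) = K := by
    ext z
    simp [K.smul_mem_iff hc]
  have hcov := setIntegral_map_equiv (μ := μH[s]) (MeasurableEquiv.smul₀ c hc) g K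
  rw [hpre, hmap, Measure.restrict_smul, integral_smul_nnreal_measure,
    MeasurableEquiv.coe_smul₀] at hcov
  rw [← hcov, NNReal.smul_def]
  congr 1
  simp [Real.rpow_neg (norm_nonneg c), Real.inv_rpow (norm_nonneg c)]

theorem tendsto_integral_exp_neg_slope {E : Type*} [NormedAddCommGroup E] [NormedSpace ℝ E]
    [MeasurableSpace E] [OpensMeasurableSpace E] {μ : Measure E} {R : E → ℝ}
    (hconv : ConvexOn ℝ Set.univ R) (hcont : Continuous R) {x : E} {D : E → ℝ}
    (hD : ∀ᵐ z ∂μ, Tendsto (fun t : ℝ => (R (x + t • z) - R x) / t) (𝓝[>] 0) (𝓝 (D z)))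
    (hV : Integrable (fun z => exp (-D z)) μ) :
    Tendsto (fun τ : ℝ => ∫ z, exp (-((R (x + τ • z) - R x) / τ)) ∂μ) (𝓝[>] 0)
      (𝓝 (∫ z, exp (-D z) ∂μ)) := by
  refine tendsto_integral_filter_of_dominated_convergence _
    (.of_forall fun τ => (by fun_prop : Continuous _).aestronglyMeasurable) ?_ hV ?_
  · filter_upwards [self_mem_nhdsWithin] with τ (hτ : 0 < τ)
    filter_upwards [hD] with z hz
    rw [norm_eq_abs, abs_exp, exp_le_exp, neg_le_neg_iff]
    exact hconv.le_slope_of_tendsto hz hτ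
  · filter_upwards [hD] with z hz
    exact (continuous_exp.tendsto _).comp hz.neg

theorem setIntegral_exp_neg_slope_hausdorffMeasure {E : Type*} [NormedAddCommGroup E]
    [NormedSpace ℝ E] [MeasurableSpace E] [BorelSpace E] {s : ℝ} (hs : 0 ≤ s)
    (K : Submodule ℝ E) (R : E → ℝ) (x : E) {τ : ℝ} (hτ : 0 < τ) :
    ∫ z in K, exp (-((R (x + τ • z) - R x) / τ)) ∂μH[s] =
      τ ^ (-s) * exp (R x / τ) * ∫ v in K, exp (-R (x + v) / τ) ∂μH[s] := by
  have hrescale : ∀ z, exp (-((R (x + τ • z) - R x) / τ)) =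
      exp (R x / τ) * exp (-R (x + τ • z) / τ) := by
    intro z
    rw [← exp_add]
    ring_nf
  simp_rw [hrescale, integral_const_mul]
  rw [setIntegral_comp_smul_hausdorffMeasure hs K (fun v => exp (-R (x + v) / τ)) hτ.ne',
    norm_of_nonneg hτ.le, smul_eq_mul]
  ring

theorem nonsmooth_laplace_interpolating_fiber_general (n d : ℕ) (hnd : n ≤ d)
    (X : Matrix (Fin n) (Fin d) ℝ)
    (R : EuclideanSpace ℝ (Fin d) → ℝ)
    (hconv : ConvexOn ℝ Set.univ R)
    (θs : EuclideanSpace ℝ (Fin d))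
    (D : EuclideanSpace ℝ (Fin d) → ℝ)
    (hD : ∀ z : EuclideanSpace ℝ (Fin d), X.mulVec z = 0 →
      Filter.Tendsto (fun t : ℝ => (R (θs + t • z) - R θs) / t)
        (nhdsWithin 0 (Set.Ioi 0)) (nhds (D z)))
    (hV : IntegrableOn (fun z => Real.exp (-D z))
      {z : EuclideanSpace ℝ (Fin d) | X.mulVec z = 0} μH[((d : ℝ) - n)]) :
    Filter.Tendsto
      (fun τ : ℝ => τ ^ (-((d : ℝ) - n)) * Real.exp (R θs / τ) *
        ∫ v in {z : EuclideanSpace ℝ (Fin d) | X.mulVec z = 0},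
          Real.exp (-R (θs + v) / τ) ∂μH[((d : ℝ) - n)])
      (nhdsWithin 0 (Set.Ioi 0))
      (nhds (∫ z in {z : EuclideanSpace ℝ (Fin d) | X.mulVec z = 0},
        Real.exp (-D z) ∂μH[((d : ℝ) - n)])) := by
  have hs : 0 ≤ (d : ℝ) - n := sub_nonneg.2 (Nat.cast_le.2 hnd)
  let K : Submodule ℝ (EuclideanSpace ℝ (Fin d)) :=
    LinearMap.ker (X.mulVecLin ∘ₗ (WithLp.linearEquiv 2 ℝ (Fin d → ℝ)).toLinearMap)
  have hK : {z : EuclideanSpace ℝ (Fin d) | X.mulVec z = 0} = K := rfl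
  rw [hK] at hV ⊢
  have hD_ae := ae_restrict_of_forall_mem (μ := μH[(d : ℝ) - n])
    K.closed_of_finiteDimensional.measurableSet hD
  have hcont : Continuous R := continuousOn_univ.1 (hconv.continuousOn isOpen_univ)
  refine (tendsto_integral_exp_neg_slope hconv hcont hD_ae hV).congr' ?_
  filter_upwards [self_mem_nhdsWithin] with τ hτ
  exact setIntegral_exp_neg_slope_hausdorffMeasure hs K R θs hτ

/-- Non-smooth Laplace asymptotics on the interpolating fiber.
`R` convex with unique minimizer `θ*` over `{θ : Xθ = Y}`, `D z` the one-sided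
directional derivative of `R` at `θ*` in direction `z ∈ ker X`, and
`V = ∫_{ker X} e^{-D z} dH^{d-n}(z)` finite.  Then
`τ^{-(d-n)} e^{R(θ*)/τ} ∫_{ker X} e^{-R(θ*+v)/τ} dH^{d-n}(v) → V` as `τ → 0⁺`. -/
theorem nonsmooth_laplace_interpolating_fiber (n d : ℕ) (hnd : n ≤ d)
    (X : Matrix (Fin n) (Fin d) ℝ) (hrank : X.rank = n) (Y : Fin n → ℝ)
    (R : EuclideanSpace ℝ (Fin d) → ℝ)
    (hconv : ConvexOn ℝ Set.univ R)
    (θs : EuclideanSpace ℝ (Fin d)) (hθs : X.mulVec θs = Y)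
    (hmin : ∀ θ : EuclideanSpace ℝ (Fin d), X.mulVec θ = Y → θ ≠ θs → R θs < R θ)
    (D : EuclideanSpace ℝ (Fin d) → ℝ)
    (hD : ∀ z : EuclideanSpace ℝ (Fin d), X.mulVec z = 0 →
      Filter.Tendsto (fun t : ℝ => (R (θs + t • z) - R θs) / t)
        (nhdsWithin 0 (Set.Ioi 0)) (nhds (D z)))
    (hV : IntegrableOn (fun z => Real.exp (-D z))
      {z : EuclideanSpace ℝ (Fin d) | X.mulVec z = 0} μH[((d : ℝ) - n)]) :
    Filter.Tendsto
      (fun τ : ℝ => τ ^ (-((d : ℝ) - n)) * Real.exp (R θs / τ) *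
        ∫ v in {z : EuclideanSpace ℝ (Fin d) | X.mulVec z = 0},
          Real.exp (-R (θs + v) / τ) ∂μH[((d : ℝ) - n)])
      (nhdsWithin 0 (Set.Ioi 0))
      (nhds (∫ z in {z : EuclideanSpace ℝ (Fin d) | X.mulVec z = 0},
        Real.exp (-D z) ∂μH[((d : ℝ) - n)])) :=
  nonsmooth_laplace_interpolating_fiber_general n d hnd X R hconv θs D hD hV
end

section
/- Let $X \in \mathbb{R}^{n \times d}$, let $\theta^* \in \mathbb{R}^d$ be nonzero with support $S = \{j : \theta^*_j \neq 0\}$, complement $C = \{1,\dots,d\}\setminus S$, and sign vector $s = \mathrm{sgn}(\theta^*_S)$. Suppose the submatrix $X_S$ (the columns of $X$ indexed by $S$) has full column rank, and there exists $\mu \in \mathbb{R}^n$ with $X_S^\top\mu = s$ and $\|X_C^\top\mu\|_\infty < 1$. Then there exists a constant $\alpha > 0$ such that for all $z \in \ker X$, $\|z_C\|_1 + s \cdot z_S \ge \alpha\|z\|_1$. -/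
/-!
For `z ∈ ker X` the vector `Xᵀμ` is orthogonal to `z`, so subtracting `⟪Xᵀμ, z⟫ = 0` from the
directional derivative and using `(Xᵀμ)_S = s` leaves `∑_{j ∈ C} (|z_j| - (Xᵀμ)_j z_j)`, which is at
least the weighted norm `∑_{j ∈ C} (1 - |(Xᵀμ)_j|) |z_j|` with positive weights. On `ker X` this
weighted norm of `z_C` is a genuine norm, because `z_C = 0` forces `z = 0` by the independence of
the columns of `X_S`; by equivalence of norms on the finite-dimensional space `ker X` it dominates
a multiple of `‖z‖₁`.
-/

open Matrix Finset

theorem Matrix.eq_zero_of_mulVec_eq_zero_of_linearIndependent {m ι R : Type*} [Fintype m]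
    [Fintype ι] [CommRing R] (X : Matrix m ι R) (p : ι → Prop) [DecidablePred p]
    (hX : LinearIndependent R (fun j : {j // p j} => fun i => X i j.1))
    {z : ι → R} (hz : X *ᵥ z = 0) (hzp : ∀ j, ¬ p j → z j = 0) : z = 0 := by
  have hcomb : ∑ j : {j // p j}, z j • (fun i => X i j.1) = 0 := by
    rw [← hz, ← sum_subtype (univ.filter p) (by simp) (fun j => z j • fun i => X i j),
      sum_filter_of_ne fun j _ hj => by_contra fun hpj => hj (by simp [hzp j hpj])]
    ext i
    simp [Matrix.mulVec, dotProduct, mul_comm]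
  funext j
  by_cases hj : p j
  · exact Fintype.linearIndependent_iff.mp hX _ hcomb ⟨j, hj⟩
  · exact hzp j hj

theorem LinearMap.exists_pos_mul_norm_le_of_injective {E F : Type*} [NormedAddCommGroup E]
    [NormedSpace ℝ E] [FiniteDimensional ℝ E] [NormedAddCommGroup F] [NormedSpace ℝ F]
    (f : E →ₗ[ℝ] F) (hf : Function.Injective f) : ∃ c > 0, ∀ x, c * ‖x‖ ≤ ‖f x‖ :=
  antilipschitzWith_iff_exists_mul_le_norm.mp <|
    let ⟨K, _, hK⟩ := f.injective_iff_antilipschitz.mp hf; ⟨K, hK⟩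

theorem Submodule.exists_pos_mul_sum_abs_le_sum_mul_abs {ι : Type*} [Fintype ι]
    (V : Submodule ℝ (ι → ℝ)) (C : Finset ι) (w : ι → ℝ) (hw : ∀ j ∈ C, 0 < w j)
    (hV : ∀ z ∈ V, (∀ j ∈ C, z j = 0) → z = 0) :
    ∃ c > 0, ∀ z ∈ V, c * ∑ j, |z j| ≤ ∑ j ∈ C, w j * |z j| := by
  let P : V →ₗ[ℝ] C → ℝ := (LinearMap.pi fun j : C => w j • LinearMap.proj j.1) ∘ₗ V.subtype
  have hP : Function.Injective P := by
    refine (injective_iff_map_eq_zero P).mpr fun z hz => Subtype.ext <| hV z z.2 fun j hj => ?_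
    have := congr_fun hz ⟨j, hj⟩
    simpa [P, (hw j hj).ne'] using this
  obtain ⟨c, hc, hcP⟩ := P.exists_pos_mul_norm_le_of_injective hP
  refine ⟨c / (Fintype.card ι + 1), by positivity, fun z hz => ?_⟩
  have hsum : ∑ j, |z j| ≤ Fintype.card ι * ‖z‖ := by
    simpa using sum_le_sum fun j (_ : j ∈ univ) => norm_le_pi_norm z j
  have hPz : ‖P ⟨z, hz⟩‖ ≤ ∑ j ∈ C, w j * |z j| := by
    refine (pi_norm_le_iff_of_nonneg (sum_nonneg fun j hj => ?_)).mpr fun j => ?_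
    · exact mul_nonneg (hw j hj).le (abs_nonneg _)
    · simp only [P, LinearMap.comp_apply, LinearMap.pi_apply, LinearMap.smul_apply,
        LinearMap.proj_apply, Submodule.subtype_apply, smul_eq_mul, Real.norm_eq_abs, abs_mul,
        abs_of_pos (hw j j.2)]
      exact single_le_sum (f := fun j => w j * |z j|)
        (fun j hj => mul_nonneg (hw j hj).le (abs_nonneg _)) j.2
  calc c / (Fintype.card ι + 1) * ∑ j, |z j|
      ≤ c / (Fintype.card ι + 1) * (Fintype.card ι * ‖z‖) := by gcongr
    _ ≤ c * ‖z‖ := by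
        rw [← mul_assoc]
        gcongr
        rw [div_mul_eq_mul_div, div_le_iff₀ (by positivity)]
        nlinarith
    _ ≤ ∑ j ∈ C, w j * |z j| := (hcP ⟨z, hz⟩).trans hPz

/-- `∇_z ‖θ‖₁ = ‖z_C‖₁ + sgn(θ_S) ⬝ z_S`, where `C` is the zero set of `θ`. -/
noncomputable def ell1DirDeriv {ι : Type*} [Fintype ι] (θ z : ι → ℝ) : ℝ :=
  ∑ j, if θ j = 0 then |z j| else Real.sign (θ j) * z j

theorem dotProduct_add_sum_le_ell1DirDeriv {ι : Type*} [Fintype ι] (θ g z : ι → ℝ)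
    (hg : ∀ j, θ j ≠ 0 → g j = Real.sign (θ j)) :
    g ⬝ᵥ z + ∑ j with θ j = 0, (1 - |g j|) * |z j| ≤ ell1DirDeriv θ z := by
  rw [dotProduct, sum_filter, ← sum_add_distrib]
  refine sum_le_sum fun j _ => ?_
  split_ifs with hj
  · nlinarith [abs_mul_abs_self (g j), le_abs_self (g j * z j), abs_mul (g j) (z j)]
  · rw [hg j hj, add_zero]

open Classical in
theorem ell1_directional_derivative_lower_bound_general (n d : ℕ)
    (X : Matrix (Fin n) (Fin d) ℝ) (θs : Fin d → ℝ)
    (hXS : LinearIndependent ℝ (fun j : {j : Fin d // θs j ≠ 0} => fun i => X i j.1))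
    (μ : Fin n → ℝ)
    (hcert : ∀ j, θs j ≠ 0 → ∑ i, X i j * μ i = Real.sign (θs j))
    (hstrict : ∀ j, θs j = 0 → |∑ i, X i j * μ i| < 1) :
    ∃ α > 0, ∀ z : Fin d → ℝ, X.mulVec z = 0 →
      α * ∑ j, |z j| ≤ ∑ j, if θs j = 0 then |z j| else Real.sign (θs j) * z j := by
  have hv : ∀ j, (μ ᵥ* X) j = ∑ i, X i j * μ i := fun j => by
    simp only [vecMul, dotProduct, mul_comm]
  obtain ⟨α, hα, hker⟩ := (LinearMap.ker X.mulVecLin).exists_pos_mul_sum_abs_le_sum_mul_abs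
    {j | θs j = 0} (fun j => 1 - |(μ ᵥ* X) j|)
    (fun j hj => by simpa [hv] using hstrict j (by simpa using hj))
    (fun z hz hzC => X.eq_zero_of_mulVec_eq_zero_of_linearIndependent _ hXS hz
      fun j hj => hzC j (by simpa using hj))
  refine ⟨α, hα, fun z hz => ?_⟩
  calc α * ∑ j, |z j| ≤ ∑ j with θs j = 0, (1 - |(μ ᵥ* X) j|) * |z j| := hker z hz
    _ = (μ ᵥ* X) ⬝ᵥ z + ∑ j with θs j = 0, (1 - |(μ ᵥ* X) j|) * |z j| := by
        rw [← dotProduct_mulVec, hz, dotProduct_zero, zero_add]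
    _ ≤ ell1DirDeriv θs z :=
        dotProduct_add_sum_le_ell1DirDeriv θs _ z fun j hj => (hv j).trans (hcert j hj)

open Classical in
/-- Dual-certificate lower bound on the directional derivative of
the `ℓ¹` norm.  With `S = supp θ*`, `s = sgn(θ*_S)`, if the columns of `X` on `S`
are linearly independent and there is `μ` with `X_Sᵀμ = s`, `‖X_Cᵀμ‖_∞ < 1`, then
there is `α > 0` with `‖z_C‖₁ + s·z_S ≥ α ‖z‖₁` for all `z ∈ ker X`. -/
theorem ell1_directional_derivative_lower_bound (n d : ℕ)
    (X : Matrix (Fin n) (Fin d) ℝ) (θs : Fin d → ℝ) (hθs : θs ≠ 0)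
    (hXS : LinearIndependent ℝ (fun j : {j : Fin d // θs j ≠ 0} => fun i => X i j.1))
    (μ : Fin n → ℝ)
    (hcert : ∀ j, θs j ≠ 0 → ∑ i, X i j * μ i = Real.sign (θs j))
    (hstrict : ∀ j, θs j = 0 → |∑ i, X i j * μ i| < 1) :
    ∃ α > 0, ∀ z : Fin d → ℝ, X.mulVec z = 0 →
      α * ∑ j, |z j| ≤ ∑ j, if θs j = 0 then |z j| else Real.sign (θs j) * z j :=
  ell1_directional_derivative_lower_bound_general n d X θs hXS μ hcert hstrict
end

section
/- Let $m \ge 1$ and let $\psi \in \mathbb{R}^m$ with $|\psi_k| < 1$ for every $k$. Then the Lebesgue measure of the set $\big\{z \in \mathbb{R}^m : \sum_{k=1}^m (|z_k| - \psi_k z_k) \le 1\big\}$ equals $\frac{2^m}{m!}\prod_{k=1}^m \frac{1}{1 - \psi_k^2}$. -/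
/-!
On each half-line `t ↦ |t| - a t` is linear, with slope `1 - a` on `[0, ∞)` and `-(1 + a)`
on `(-∞, 0)`, so for `|a| < 1` it pushes Lebesgue measure forward to
`(1 - a)⁻¹ + (1 + a)⁻¹ = 2 / (1 - a²)` times Lebesgue measure on `[0, ∞)`. Applied
coordinatewise, the volume of the region is `∏ₖ 2 / (1 - ψₖ²)` times the volume of the
standard simplex `{y ≥ 0, ∑ yₖ ≤ 1}`. The case `ψ = 0`, where the region is the `ℓ¹` unit
ball of volume `2ᵐ / m!`, identifies the latter as `1 / m!`.
-/

open Real MeasureTheory Set ENNReal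

open scoped NNReal

lemma preimage_abs_sub_mul_inter_Ici {a : ℝ} (ha : a < 1) (s : Set ℝ) :
    (fun t => |t| - a * t) ⁻¹' s ∩ Ici 0 = (fun t => (1 - a) * t) ⁻¹' (s ∩ Ici 0) := by
  ext t
  simp only [mem_inter_iff, mem_preimage, mem_Ici]
  constructor
  · rintro ⟨hts, ht⟩
    rw [abs_of_nonneg ht] at hts
    exact ⟨by rwa [sub_mul, one_mul], by nlinarith⟩
  · rintro ⟨hts, ht⟩
    have ht' : 0 ≤ t := nonneg_of_mul_nonneg_right ht (by linarith)
    rw [abs_of_nonneg ht']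
    exact ⟨by rwa [sub_mul, one_mul] at hts, ht'⟩

lemma preimage_abs_sub_mul_inter_Iio {a : ℝ} (ha : -1 < a) (s : Set ℝ) :
    (fun t => |t| - a * t) ⁻¹' s ∩ Iio 0 = (fun t => -(1 + a) * t) ⁻¹' (s ∩ Ioi 0) := by
  ext t
  simp only [mem_inter_iff, mem_preimage, mem_Iio, mem_Ioi]
  constructor
  · rintro ⟨hts, ht⟩
    rw [abs_of_neg ht] at hts
    exact ⟨by rwa [neg_mul, add_mul, one_mul, neg_add], by nlinarith⟩
  · rintro ⟨hts, ht⟩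
    have ht' : t < 0 := by nlinarith
    rw [abs_of_neg ht']
    exact ⟨by rwa [neg_mul, add_mul, one_mul, neg_add] at hts, ht'⟩

theorem map_abs_sub_mul_volume {a : ℝ} (ha : |a| < 1) :
    volume.map (fun t => |t| - a * t)
      = ENNReal.ofReal (2 / (1 - a ^ 2)) • volume.restrict (Ici 0) := by
  obtain ⟨ha₁, ha₂⟩ := abs_lt.mp ha
  have hsub : 0 < 1 - a := by linarith
  have hadd : 0 < 1 + a := by linarith
  ext s hs
  rw [Measure.map_apply (by fun_prop) hs, Measure.smul_apply, Measure.restrict_apply hs,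
    smul_eq_mul, ← measure_inter_add_sdiff _ (measurableSet_Ici (a := 0)), sdiff_eq, compl_Ici,
    preimage_abs_sub_mul_inter_Ici ha₂, preimage_abs_sub_mul_inter_Iio ha₁,
    volume_preimage_mul_left hsub.ne', volume_preimage_mul_left (neg_ne_zero.mpr hadd.ne'),
    measure_congr (Filter.EventuallyEq.rfl.inter Ioi_ae_eq_Ici), ← add_mul,
    ← ENNReal.ofReal_add (by positivity) (by positivity)]
  congr 2
  rw [abs_inv, abs_inv, abs_of_pos hsub, abs_neg, abs_of_pos hadd,
    show 1 - a ^ 2 = (1 - a) * (1 + a) by ring]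
  field_simp
  ring

theorem MeasureTheory.Measure.pi_nnreal_smul {ι : Type*} [Fintype ι] {α : ι → Type*}
    [∀ i, MeasurableSpace (α i)] (c : ι → ℝ≥0) (μ : ∀ i, Measure (α i))
    [∀ i, SigmaFinite (μ i)] :
    Measure.pi (fun i => c i • μ i) = (∏ i, (c i : ℝ≥0∞)) • Measure.pi μ := by
  refine Measure.pi_eq fun s hs => ?_
  simp only [Measure.smul_apply, Measure.pi_pi, smul_eq_mul, ← Finset.prod_mul_distrib]
  rfl

theorem volume_setOf_sum_abs_sub_mul_le_one {ι : Type*} [Fintype ι] {ψ : ι → ℝ}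
    (hψ : ∀ k, |ψ k| < 1) :
    volume {z : ι → ℝ | ∑ k, (|z k| - ψ k * z k) ≤ 1}
      = (∏ k, ENNReal.ofReal (2 / (1 - ψ k ^ 2)))
        * Measure.pi (fun _ : ι => volume.restrict (Ici (0 : ℝ))) {y | ∑ k, y k ≤ 1} := by
  have hmapk (k : ι) : volume.map (fun t => |t| - ψ k * t)
      = (2 / (1 - ψ k ^ 2)).toNNReal • volume.restrict (Ici (0 : ℝ)) :=
    map_abs_sub_mul_volume (hψ k)
  have (k : ι) : SigmaFinite (volume.map (fun t => |t| - ψ k * t)) := hmapk k ▸ inferInstance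
  have hmap : volume.map (fun (z : ι → ℝ) k => |z k| - ψ k * z k)
      = Measure.pi fun k => (2 / (1 - ψ k ^ 2)).toNNReal • volume.restrict (Ici (0 : ℝ)) := by
    rw [volume_pi, Measure.pi_map_pi (f := fun k t => |t| - ψ k * t) fun k => by fun_prop]
    exact congrArg Measure.pi (funext hmapk)
  have hregion : {z : ι → ℝ | ∑ k, (|z k| - ψ k * z k) ≤ 1}
      = (fun (z : ι → ℝ) k => |z k| - ψ k * z k) ⁻¹' {y | ∑ k, y k ≤ 1} := rfl
  have hsimplex : MeasurableSet {y : ι → ℝ | ∑ k, y k ≤ 1} :=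
    measurableSet_le (by fun_prop) measurable_const
  rw [hregion, ← Measure.map_apply (by fun_prop) hsimplex, hmap, Measure.pi_nnreal_smul,
    Measure.smul_apply, smul_eq_mul]
  rfl

theorem pi_restrict_Ici_setOf_sum_le_one {ι : Type*} [Fintype ι] [Nonempty ι] :
    Measure.pi (fun _ : ι => volume.restrict (Ici (0 : ℝ))) {y | ∑ k, y k ≤ 1}
      = ENNReal.ofReal (1 / (Fintype.card ι).factorial) := by
  have hball := volume_setOf_sum_abs_sub_mul_le_one (ι := ι) (ψ := 0) (by simp)
  have hℓ1 := volume_sum_rpow_le ι le_rfl 1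
  simp only [Pi.zero_apply, zero_mul, sub_zero, ne_eq, OfNat.ofNat_ne_zero, not_false_eq_true,
    zero_pow, div_one, Finset.prod_const, Finset.card_univ] at hball
  norm_num [Real.Gamma_nat_eq_factorial] at hℓ1
  rw [hℓ1, ← mul_one_div, ENNReal.ofReal_mul (by positivity),
    ENNReal.ofReal_pow zero_le_two] at hball
  exact ((ENNReal.mul_right_inj (by positivity) (by finiteness)).mp hball).symm

/-- Volume of the anisotropic cross-polytope-like region:
for `ψ ∈ ℝᵐ` with `|ψ_k| < 1` for all `k`,
`vol {z : ∑_k (|z_k| - ψ_k z_k) ≤ 1} = (2^m / m!) ∏_k 1/(1 - ψ_k²)`. -/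
theorem volume_anisotropic_cross_polytope (m : ℕ) (hm : 1 ≤ m)
    (ψ : Fin m → ℝ) (hψ : ∀ k, |ψ k| < 1) :
    volume {z : Fin m → ℝ | ∑ k, (|z k| - ψ k * z k) ≤ 1}
      = ENNReal.ofReal ((2 : ℝ) ^ m / (m.factorial : ℝ) * ∏ k, 1 / (1 - (ψ k) ^ 2)) := by
  have : Nonempty (Fin m) := ⟨⟨0, hm⟩⟩
  have hfactor (k : Fin m) : 0 ≤ 2 / (1 - ψ k ^ 2) := by
    have := (sq_lt_one_iff_abs_lt_one _).mpr (hψ k)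
    positivity
  rw [volume_setOf_sum_abs_sub_mul_le_one hψ, pi_restrict_Ici_setOf_sum_le_one, Fintype.card_fin,
    ← ENNReal.ofReal_prod_of_nonneg fun k _ => hfactor k,
    ← ENNReal.ofReal_mul (Finset.prod_nonneg fun k _ => hfactor k)]
  congr 1
  simp only [div_eq_mul_one_div (2 : ℝ), Finset.prod_mul_distrib, Finset.prod_const,
    Finset.card_univ, Fintype.card_fin]
  ring
end
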